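/- arXiv:2106.09567 — 3 statements merged into one kernel-verified Lean document; each statement's English description precedes it below -/
import Mathlib

section
/- For positive definite density matrices ρ and σ, Tr(ρ² σ⁻¹) ≥ 1, with equality if and only if ρ = σ. -/
/-!
With `D = ρ - σ`, the expansion of `D σ⁻¹ D` and the trace conditions give
`Tr(ρ² σ⁻¹) = 1 + Tr(D σ⁻¹ D)`. Since `σ⁻¹` is positive definite and `D` is Hermitian,
`D σ⁻¹ D = Dᴴ σ⁻¹ D` is positive semidefinite, so its trace is nonnegative and vanishes
only when `D = 0`.
-/

open Matrix
open scoped ComplexOrder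

namespace Matrix

variable {n R : Type*} [Fintype n]

theorem PosDef.conjTranspose_mul_mul_same_eq_zero_iff [Ring R] [PartialOrder R] [StarRing R]
    {A B : Matrix n n R} (hA : A.PosDef) : Bᴴ * A * B = 0 ↔ B = 0 := by
  refine ⟨fun h ↦ ext_iff_mulVec.mpr fun x ↦ ?_, fun h ↦ by simp [h]⟩
  rw [zero_mulVec]
  by_contra hBx
  have hpos := hA.dotProduct_mulVec_pos hBx
  rw [star_mulVec, dotProduct_mulVec, vecMul_vecMul, ← dotProduct_mulVec, mulVec_mulVec, h] at hpos
  simp at hpos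

theorem PosDef.trace_conjTranspose_mul_mul_same_eq_zero_iff {𝕜 : Type*} [RCLike 𝕜]
    {A B : Matrix n n 𝕜} (hA : A.PosDef) : (Bᴴ * A * B).trace = 0 ↔ B = 0 :=
  (hA.posSemidef.conjTranspose_mul_mul_same B).trace_eq_zero_iff.trans
    hA.conjTranspose_mul_mul_same_eq_zero_iff

theorem trace_sub_mul_inv_mul_sub [CommRing R] [DecidableEq n] {ρ σ : Matrix n n R}
    (hσ : IsUnit σ.det) :
    ((ρ - σ) * σ⁻¹ * (ρ - σ)).trace = (ρ ^ 2 * σ⁻¹).trace - 2 * ρ.trace + σ.trace := by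
  have hρ : (ρ * σ⁻¹ * ρ).trace = (ρ ^ 2 * σ⁻¹).trace := by
    rw [trace_mul_cycle, ← pow_two]
  simp only [sub_mul, mul_sub, trace_sub, hρ, nonsing_inv_mul_cancel_right _ _ hσ,
    mul_nonsing_inv _ hσ, one_mul]
  ring

end Matrix

/-- For positive definite density matrices `ρ` and `σ`, `Tr(ρ² σ⁻¹) ≥ 1`,
with equality if and only if `ρ = σ`. -/
theorem trace_sq_mul_inv_ge_one {d : ℕ}
    (ρ σ : Matrix (Fin d) (Fin d) ℂ)
    (hρ : ρ.PosDef) (hσ : σ.PosDef)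
    (hρtr : ρ.trace = 1) (hσtr : σ.trace = 1) :
    1 ≤ (ρ ^ 2 * σ⁻¹).trace.re ∧ ((ρ ^ 2 * σ⁻¹).trace.re = 1 ↔ ρ = σ) := by
  have hD : (ρ - σ)ᴴ = ρ - σ := (hρ.isHermitian.sub hσ.isHermitian).eq
  set t := ((ρ - σ)ᴴ * σ⁻¹ * (ρ - σ)).trace with ht_def
  have ht : 0 ≤ t := (hσ.inv.posSemidef.conjTranspose_mul_mul_same _).trace_nonneg
  have htr : (ρ ^ 2 * σ⁻¹).trace = 1 + t := by
    rw [ht_def, hD, trace_sub_mul_inv_mul_sub hσ.det_pos.ne'.isUnit, hρtr, hσtr]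
    ring
  have ht_eq_zero : t = 0 ↔ ρ = σ :=
    hσ.inv.trace_conjTranspose_mul_mul_same_eq_zero_iff.trans sub_eq_zero
  obtain ⟨ht_re, ht_im⟩ := Complex.nonneg_iff.mp ht
  rw [htr, Complex.add_re, Complex.one_re, ← ht_eq_zero, Complex.ext_iff]
  refine ⟨by linarith, ?_⟩
  simp only [Complex.zero_re, Complex.zero_im, ← ht_im, and_true]
  constructor <;> intro h <;> linarith
end

section
/- Duhamel's formula: for a differentiable family of matrices H(θ), ∂_θ e^{-H(θ)} = -∫_0^1 e^{-sH(θ)} (∂_θ H(θ)) e^{-(1-s)H(θ)} ds. -/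
/-!
Since `s ↦ exp (s • A) * exp ((1 - s) • B)` has derivative
`exp (s • A) * (A - B) * exp ((1 - s) • B)`, in any real Banach algebra
`exp A - exp B = ∫₀¹ exp (s • A) * (A - B) * exp ((1 - s) • B) ds`.
With `A = H t`, `B = H θ` this writes the difference quotient of `exp ∘ H` at `θ` as
`∫₀¹ exp (s • H t) * slope H θ t * exp ((1 - s) • H θ) ds`,
a jointly continuous function of `(H t, slope H θ t)`, which tends to `(H θ, H')`.
Matrices are made a Banach algebra by the `ℓ∞`-operator norm; it induces the entrywise topology,
so derivatives and integrals can be read off entry by entry.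
-/

open Filter Topology NormedSpace Matrix intervalIntegral

section BanachAlgebra

variable {𝔸 : Type*} [NormedRing 𝔸] [NormedAlgebra ℝ 𝔸] [CompleteSpace 𝔸]

@[fun_prop]
theorem continuous_exp_of_real : Continuous (exp : 𝔸 → 𝔸) :=
  continuous_iff_continuousAt.2 fun x => (exp_analytic (𝕂 := ℝ) x).continuousAt

theorem hasDerivAt_exp_smul_mul_exp_smul (A B : 𝔸) (s : ℝ) :
    HasDerivAt (fun s : ℝ => exp (s • A) * exp ((1 - s) • B))
      (exp (s • A) * (A - B) * exp ((1 - s) • B)) s := by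
  have hB : HasDerivAt (fun s : ℝ => exp ((1 - s) • B)) (-(B * exp ((1 - s) • B))) s := by
    simpa [Function.comp_def] using
      (hasDerivAt_exp_smul_const' B (1 - s)).scomp s ((hasDerivAt_id s).const_sub 1)
  refine ((hasDerivAt_exp_smul_const A s).mul hB).congr_deriv ?_
  noncomm_ring

theorem exp_sub_exp_eq_integral (A B : 𝔸) :
    exp A - exp B = ∫ s in (0 : ℝ)..1, exp (s • A) * (A - B) * exp ((1 - s) • B) := by
  have hcont : Continuous fun s : ℝ => exp (s • A) * (A - B) * exp ((1 - s) • B) := by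
    fun_prop
  rw [integral_eq_sub_of_hasDerivAt (fun s _ => hasDerivAt_exp_smul_mul_exp_smul A B s)
    (hcont.intervalIntegrable 0 1)]
  simp

theorem continuous_integral_exp_smul_mul_mul_exp_smul (C : 𝔸) :
    Continuous fun p : 𝔸 × 𝔸 =>
      ∫ s in (0 : ℝ)..1, exp (s • p.1) * p.2 * exp ((1 - s) • C) :=
  continuous_parametric_intervalIntegral_of_continuous' (by fun_prop) 0 1

theorem hasDerivAt_exp_comp {H : ℝ → 𝔸} {H' : 𝔸} {θ : ℝ} (hH : HasDerivAt H H' θ) :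
    HasDerivAt (fun t => exp (H t))
      (∫ s in (0 : ℝ)..1, exp (s • H θ) * H' * exp ((1 - s) • H θ)) θ := by
  have hslope : Tendsto (fun t => (H t, slope H θ t)) (𝓝[≠] θ) (𝓝 (H θ, H')) :=
    (hH.continuousAt.tendsto.mono_left nhdsWithin_le_nhds).prodMk_nhds
      (hasDerivAt_iff_tendsto_slope.1 hH)
  refine hasDerivAt_iff_tendsto_slope.2 <|
    (((continuous_integral_exp_smul_mul_mul_exp_smul (H θ)).tendsto _).comp hslope).congr
      fun t => ?_
  simp only [Function.comp_apply, slope_def_module, exp_sub_exp_eq_integral (H t) (H θ),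
    ← integral_smul, smul_mul_assoc, mul_smul_comm]

end BanachAlgebra

namespace Matrix

section LinftyOpNorm

attribute [local instance] Matrix.linftyOpNormedAddCommGroup Matrix.linftyOpNormedSpace
  Matrix.linftyOpNormedRing Matrix.linftyOpNormedAlgebra

theorem hasDerivAt_iff_forall_apply {m n 𝕜 E : Type*} [Fintype m] [Fintype n]
    [NontriviallyNormedField 𝕜] [NormedAddCommGroup E] [NormedSpace 𝕜 E]
    {F : 𝕜 → Matrix m n E} {F' : Matrix m n E} {x : 𝕜} :
    HasDerivAt F F' x ↔ ∀ i j, HasDerivAt (fun t => F t i j) (F' i j) x :=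
  hasDerivAt_iff_tendsto_slope.trans <| tendsto_pi_nhds.trans <| forall_congr' fun _ =>
    tendsto_pi_nhds.trans <| forall_congr' fun _ => hasDerivAt_iff_tendsto_slope.symm

theorem intervalIntegral_apply {m n 𝕜 : Type*} [Fintype m] [Fintype n] [RCLike 𝕜]
    {f : ℝ → Matrix m n 𝕜} (hf : Continuous f) (a b : ℝ) (i : m) (j : n) :
    (∫ s in a..b, f s) i j = ∫ s in a..b, f s i j :=
  (ContinuousLinearMap.intervalIntegral_comp_comm
    ⟨entryLinearMap ℝ 𝕜 i j, (continuous_apply j).comp (continuous_apply i)⟩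
    (hf.intervalIntegrable a b)).symm

theorem hasDerivAt_exp_apply {n 𝕜 : Type*} [Fintype n] [DecidableEq n] [RCLike 𝕜]
    {H : ℝ → Matrix n n 𝕜} {H' : Matrix n n 𝕜} {θ : ℝ}
    (hH : ∀ i j, HasDerivAt (fun t => H t i j) (H' i j) θ) (i j : n) :
    HasDerivAt (fun t => exp (H t) i j)
      (∫ s in (0 : ℝ)..1, (exp (s • H θ) * H' * exp ((1 - s) • H θ)) i j) θ := by
  have hcont : Continuous fun s : ℝ => exp (s • H θ) * H' * exp ((1 - s) • H θ) := by
    fun_prop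
  rw [← intervalIntegral_apply hcont]
  exact hasDerivAt_iff_forall_apply.1 (hasDerivAt_exp_comp (hasDerivAt_iff_forall_apply.2 hH)) i j

end LinftyOpNorm

end Matrix

/-- **Duhamel's formula.**  For a differentiable family of matrices `H(θ)`,
`∂_θ e^{-H(θ)} = -∫_0^1 e^{-s H(θ)} (∂_θ H(θ)) e^{-(1-s) H(θ)} ds` (entrywise). -/
theorem hasDerivAt_exp_neg {d : ℕ}
    (H : ℝ → Matrix (Fin d) (Fin d) ℂ) (H' : Matrix (Fin d) (Fin d) ℂ) (θ : ℝ)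
    (hderiv : ∀ a b, HasDerivAt (fun t => H t a b) (H' a b) θ) :
    ∀ a b, HasDerivAt (fun t => NormedSpace.exp (-(H t)) a b)
      (-(∫ s in (0 : ℝ)..1,
        (NormedSpace.exp (((-s : ℝ) : ℂ) • H θ) * H' *
          NormedSpace.exp (((-(1 - s) : ℝ) : ℂ) • H θ)) a b)) θ := by
  intro a b
  refine (hasDerivAt_exp_apply (H := fun t => -H t) (H' := -H')
    (fun i j => (hderiv i j).neg) a b).congr_deriv ?_
  rw [← integral_neg]
  refine integral_congr fun s _ => ?_
  simp only [Complex.coe_smul, neg_smul, smul_neg, mul_neg, neg_mul, Matrix.neg_apply]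
end

section
/- Let σ(θ) = U(θ)|0⟩⟨0|U(θ)† be a pure-state family with ∂_{θ_k} σ = -i[H̃_k, σ] for a Hermitian unitary contraction H̃_k (‖H̃_k‖ ≤ 1), and let ρ be positive definite. Then the gradient of the reverse maximal Rényi 2-divergence is bounded by |∂_{θ_k} log Tr(σ² ρ⁻¹)| ≤ 4 ‖ρ⁻¹‖ / Tr(σ² ρ⁻¹). -/
/-!
Write the state as `σ = Aᴴ A`. Then `Tr(B σ) = ∑ᵢ ⟨aᵢ, B aᵢ⟩` over the columns `aᵢ` of `Aᴴ`, so
`|Tr(B σ)| ≤ ‖B‖ Tr σ`; splitting `Tr({C, σ} ρ⁻¹)` by cyclicity into two such traces gives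
`|Tr({C, σ} ρ⁻¹)| ≤ 2 ‖C‖ ‖ρ⁻¹‖ Tr σ`. A pure state is a projection, so `‖σ‖ ≤ 1` and the
commutator `C = [H̃, σ]` has norm at most `2`. Finally `Tr(σ² ρ⁻¹) = Tr(A ρ⁻¹ Aᴴ)` is a nonnegative
real; if it vanishes, both sides of the bound are `0`.
-/

open Matrix
open scoped ComplexOrder Matrix.Norms.L2Operator

namespace Matrix

open scoped MatrixOrder

variable {𝕜 n : Type*} [RCLike 𝕜] [Fintype n]

lemma norm_star_dotProduct_mulVec_le [DecidableEq n] (B : Matrix n n 𝕜) (x : n → 𝕜) :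
    ‖star x ⬝ᵥ B *ᵥ x‖ ≤ ‖B‖ * ‖WithLp.toLp 2 x‖ ^ 2 := by
  rw [dotProduct_comm, ← EuclideanSpace.inner_toLp_toLp]
  calc _ ≤ ‖WithLp.toLp 2 x‖ * ‖WithLp.toLp 2 (B *ᵥ x)‖ := norm_inner_le_norm _ _
    _ ≤ ‖WithLp.toLp 2 x‖ * (‖B‖ * ‖WithLp.toLp 2 x‖) := by
      gcongr; exact B.l2_opNorm_mulVec _
    _ = ‖B‖ * ‖WithLp.toLp 2 x‖ ^ 2 := by ring

lemma norm_toLp_sq_eq_re_star_dotProduct (x : n → 𝕜) :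
    ‖WithLp.toLp 2 x‖ ^ 2 = RCLike.re (star x ⬝ᵥ x) := by
  rw [← inner_self_eq_norm_sq (𝕜 := 𝕜), EuclideanSpace.inner_toLp_toLp, dotProduct_comm]

lemma trace_mul_conjTranspose_mul_self {m : Type*} [Fintype m] (B : Matrix n n 𝕜)
    (A : Matrix m n 𝕜) :
    (B * (Aᴴ * A)).trace = ∑ i, star (Aᴴ.col i) ⬝ᵥ B *ᵥ Aᴴ.col i := by
  rw [← Matrix.mul_assoc, trace_mul_comm, ← Matrix.mul_assoc, trace]
  refine Finset.sum_congr rfl fun i _ => ?_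
  rw [dotProduct_mulVec]
  simp [col, mul_apply, vecMul, dotProduct]

lemma PosSemidef.norm_trace_mul_le [DecidableEq n] {P : Matrix n n 𝕜} (hP : P.PosSemidef)
    (B : Matrix n n 𝕜) : ‖(B * P).trace‖ ≤ ‖B‖ * RCLike.re P.trace := by
  obtain ⟨A, rfl⟩ := CStarAlgebra.nonneg_iff_eq_star_mul_self.mp hP.nonneg
  have htrace : (Aᴴ * A).trace = ∑ i, star (Aᴴ.col i) ⬝ᵥ Aᴴ.col i := by
    simpa using trace_mul_conjTranspose_mul_self 1 A
  rw [star_eq_conjTranspose, htrace, trace_mul_conjTranspose_mul_self, map_sum, Finset.mul_sum]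
  refine (norm_sum_le _ _).trans (Finset.sum_le_sum fun i _ => ?_)
  rw [← norm_toLp_sq_eq_re_star_dotProduct]
  exact norm_star_dotProduct_mulVec_le B _

lemma PosSemidef.norm_trace_anticommutator_mul_le [DecidableEq n] {P : Matrix n n 𝕜}
    (hP : P.PosSemidef) (C R : Matrix n n 𝕜) :
    ‖((C * P + P * C) * R).trace‖ ≤ 2 * ‖C‖ * ‖R‖ * RCLike.re P.trace := by
  have hsplit : ((C * P + P * C) * R).trace = (R * C * P).trace + (C * R * P).trace := by
    rw [add_mul, trace_add, trace_mul_cycle C, trace_mul_cycle P, trace_mul_cycle R P]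
  have htr : 0 ≤ RCLike.re P.trace := RCLike.nonneg_iff.mp hP.trace_nonneg |>.1
  calc _ ≤ ‖R * C‖ * RCLike.re P.trace + ‖C * R‖ * RCLike.re P.trace := by
        rw [hsplit]
        exact (norm_add_le _ _).trans (add_le_add (hP.norm_trace_mul_le _)
          (hP.norm_trace_mul_le _))
    _ ≤ ‖R‖ * ‖C‖ * RCLike.re P.trace + ‖C‖ * ‖R‖ * RCLike.re P.trace := by
        gcongr <;> exact norm_mul_le _ _
    _ = 2 * ‖C‖ * ‖R‖ * RCLike.re P.trace := by ring

lemma PosSemidef.trace_mul_nonneg {P Q : Matrix n n 𝕜} (hP : P.PosSemidef) (hQ : Q.PosSemidef) :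
    0 ≤ (P * Q).trace := by
  classical
  obtain ⟨A, rfl⟩ := CStarAlgebra.nonneg_iff_eq_star_mul_self.mp hP.nonneg
  rw [star_eq_conjTranspose, Matrix.mul_assoc, trace_mul_comm]
  exact (hQ.mul_mul_conjTranspose_same A).trace_nonneg

end Matrix

lemma norm_mul_sub_mul_le {R : Type*} [NonUnitalSeminormedRing R] (a b : R) :
    ‖a * b - b * a‖ ≤ 2 * ‖a‖ * ‖b‖ :=
  calc ‖a * b - b * a‖ ≤ ‖a‖ * ‖b‖ + ‖b‖ * ‖a‖ :=
        (norm_sub_le _ _).trans (add_le_add (norm_mul_le _ _) (norm_mul_le _ _))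
    _ = 2 * ‖a‖ * ‖b‖ := by ring

theorem reverse_renyi_gradient_bound_general {d : ℕ}
    (σ ρ Htil : Matrix (Fin d) (Fin d) ℂ)
    (hσ : σ.PosSemidef) (hσtr : σ.trace = 1) (hpure : σ ^ 2 = σ)
    (hρ : ρ.PosDef)
    (hHnorm : ‖Htil‖ ≤ 1) :
    norm
      ((-Complex.I *
          (((Htil * σ - σ * Htil) * σ + σ * (Htil * σ - σ * Htil)) * ρ⁻¹).trace) /
        ((σ ^ 2 * ρ⁻¹).trace))
      ≤ 4 * ‖ρ⁻¹‖ / ((σ ^ 2 * ρ⁻¹).trace.re) := by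
  have hσnorm : ‖σ‖ ≤ 1 :=
    IsStarProjection.norm_le σ ⟨by rw [IsIdempotentElem, ← sq, hpure], hσ.isHermitian⟩
  have hcomm : ‖Htil * σ - σ * Htil‖ ≤ 2 := by
    nlinarith [norm_mul_sub_mul_le Htil σ, norm_nonneg Htil, norm_nonneg σ]
  have hnum := hσ.norm_trace_anticommutator_mul_le (Htil * σ - σ * Htil) ρ⁻¹
  have hden : 0 ≤ (σ ^ 2 * ρ⁻¹).trace := by
    rw [hpure]
    exact hσ.trace_mul_nonneg hρ.inv.posSemidef
  rw [norm_div, norm_mul, norm_neg, Complex.norm_I, one_mul, ← Complex.re_eq_norm.mpr hden]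
  gcongr
  · exact (Complex.nonneg_iff.mp hden).1
  · rw [hσtr, RCLike.one_re, mul_one] at hnum
    nlinarith [norm_nonneg ρ⁻¹]

/-- Bound on the gradient of the reverse maximal Rényi 2-divergence for a pure state `σ`
(with `∂_{θ_k} σ = -i[H̃ₖ, σ]` for a Hermitian contraction `H̃ₖ`) and positive definite
`ρ`: `|∂_{θ_k} log Tr(σ² ρ⁻¹)| = |(-i) Tr({[H̃ₖ,σ],σ} ρ⁻¹) / Tr(σ² ρ⁻¹)| ≤ 4‖ρ⁻¹‖ / Tr(σ² ρ⁻¹)`. -/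
theorem reverse_renyi_gradient_bound {d : ℕ}
    (σ ρ Htil : Matrix (Fin d) (Fin d) ℂ)
    (hσ : σ.PosSemidef) (hσtr : σ.trace = 1) (hpure : σ ^ 2 = σ)
    (hρ : ρ.PosDef)
    (hHerm : Htil.IsHermitian) (hHnorm : ‖Htil‖ ≤ 1) :
    norm
      ((-Complex.I *
          (((Htil * σ - σ * Htil) * σ + σ * (Htil * σ - σ * Htil)) * ρ⁻¹).trace) /
        ((σ ^ 2 * ρ⁻¹).trace))
      ≤ 4 * ‖ρ⁻¹‖ / ((σ ^ 2 * ρ⁻¹).trace.re) :=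
  reverse_renyi_gradient_bound_general σ ρ Htil hσ hσtr hpure hρ hHnorm
end
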